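/- arXiv:math-ph/0507063 — 5 statements merged into one kernel-verified Lean document; each statement's English description precedes it below -/
import Mathlib

section
/- For every c > 0 there exist constants C > 0 and κ₀ > 0 such that the following holds. Let 0 < κ ≤ κ₀, let λ, λ̃ ∈ ℂ with Im λ ≤ 0, Im λ̃ ≤ 0 and max(|Im λ|, |Im λ̃|) > 0, let a, ã ∈ ℂ with |a − 1| ≤ cκ² and |ã − 1| ≤ cκ², and let b, b̃ : [0,∞) → ℂ satisfy |b(t)| ≤ cκ² and |b̃(t)| ≤ cκ² for all t ≥ 0. If a·e^{−iλt} + b(t) = ã·e^{−iλ̃t} + b̃(t) for all t ≥ 0, then |λ − λ̃| ≤ C κ² |Im λ|. -/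
open Complex Real

lemma re_aux (l : ℂ) (t : ℝ) : (-Complex.I * l * (t:ℂ)).re = l.im * t := by
  simp [Complex.mul_re, Complex.mul_im]

lemma im_aux (l : ℂ) (t : ℝ) : (-Complex.I * l * (t:ℂ)).im = -(l.re * t) := by
  simp [Complex.mul_re, Complex.mul_im]

lemma abs_exp_aux (l : ℂ) (t : ℝ) :
    ‖Complex.exp (-Complex.I * l * (t:ℂ))‖ = Real.exp (l.im * t) := by
  rw [Complex.norm_exp, re_aux]

set_option maxHeartbeats 2000000 in
lemma key_lemma (lam lam' : ℂ) (hl : lam.im ≤ 0) (hl' : lam'.im ≤ 0)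
    (hmax : 0 < max |lam.im| |lam'.im|) (ε : ℝ) (hε0 : 0 ≤ ε)
    (hεs : Real.exp 2 * ε ≤ 1/2)
    (h : ∀ t : ℝ, 0 ≤ t →
      ‖Complex.exp (-Complex.I * lam * t) - Complex.exp (-Complex.I * lam' * t)‖ ≤ ε) :
    ‖lam - lam'‖ ≤ 7 * Real.exp 2 * ε * |lam.im| := by
  have he1 : (2.7:ℝ) < Real.exp 1 := by
    have := Real.exp_one_gt_d9; linarith
  have he1' : Real.exp 1 < 2.72 := by
    have := Real.exp_one_lt_d9; linarith
  have he2 : Real.exp 2 = Real.exp 1 * Real.exp 1 := by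
    rw [← Real.exp_add]; norm_num
  have hε8 : ε ≤ 1/8 := by nlinarith
  set η := Real.exp 2 * ε with hη
  have hη0 : 0 ≤ η := by positivity
  -- Step 1 : lam.im < 0
  have hneg : lam.im < 0 := by
    rcases lt_or_eq_of_le hl with h1 | h1
    · exact h1
    · exfalso
      have h2 : lam'.im < 0 := by
        rcases lt_or_eq_of_le hl' with h2 | h2
        · exact h2
        · rw [h1, h2] at hmax; simp at hmax
      set t : ℝ := Real.log 2 / (-lam'.im) with ht
      have ht0 : 0 ≤ t := by
        apply div_nonneg (Real.log_nonneg (by norm_num)); linarith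
      have hE : ‖Complex.exp (-Complex.I * lam * t)‖ = 1 := by
        rw [abs_exp_aux, h1]; simp
      have hE' : ‖Complex.exp (-Complex.I * lam' * t)‖ = 1/2 := by
        rw [abs_exp_aux]
        have h2' : lam'.im ≠ 0 := ne_of_lt h2
        have : lam'.im * t = -Real.log 2 := by
          rw [ht]; field_simp
        rw [this, Real.exp_neg, Real.exp_log (by norm_num)]
        norm_num
      have h4 := h t ht0
      have h3 := abs_norm_sub_norm_le
        (Complex.exp (-Complex.I * lam * t)) (Complex.exp (-Complex.I * lam' * t))
      rw [hE, hE'] at h3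
      have h5 := h3.trans h4
      rw [abs_le] at h5
      linarith [h5.2]
  have hne : lam.im ≠ 0 := ne_of_lt hneg
  -- the time scale
  set T : ℝ := -1 / lam.im with hTdef
  have hT : 0 < T := by
    rw [hTdef]
    apply div_pos_iff.2
    right
    exact ⟨by norm_num, hneg⟩
  have hTmul : lam.im * T = -1 := by
    rw [hTdef]; field_simp
  -- Step 3 : lower bound on |E'| on [0,T]
  have hE'lb : ∀ t : ℝ, 0 ≤ t → t ≤ T → Real.exp (-2) ≤ Real.exp (lam'.im * t) := by
    intro t ht0 htT
    have hmono : Real.exp (lam'.im * T) ≤ Real.exp (lam'.im * t) := by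
      apply Real.exp_le_exp.2
      exact mul_le_mul_of_nonpos_left htT hl'
    have hatT : Real.exp (-1) - ε ≤ Real.exp (lam'.im * T) := by
      have h3 := abs_norm_sub_norm_le
        (Complex.exp (-Complex.I * lam * (T:ℝ))) (Complex.exp (-Complex.I * lam' * (T:ℝ)))
      rw [abs_exp_aux, abs_exp_aux, hTmul] at h3
      have h4 := h T (le_of_lt hT)
      have h5 := h3.trans h4
      rw [abs_le] at h5
      linarith [h5.2]
    have hnum : Real.exp (-2) ≤ Real.exp (-1) - ε := by
      have hx : Real.exp (-1) * Real.exp 1 = 1 := by rw [← Real.exp_add]; simp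
      have hy : Real.exp (-2) * (Real.exp 1 * Real.exp 1) = 1 := by
        rw [← he2, ← Real.exp_add]; simp
      have hxp := Real.exp_pos (-1)
      have hyp := Real.exp_pos (-2)
      nlinarith [mul_pos hxp (Real.exp_pos 1), mul_pos hyp (Real.exp_pos 1)]
    exact le_trans (le_trans hnum hatT) hmono
  -- Step 4 : pointwise bound for the ratio
  set δ : ℂ := lam - lam' with hδ
  have hkey : ∀ t : ℝ, 0 ≤ t → t ≤ T →
      ‖Complex.exp (-Complex.I * δ * t) - 1‖ ≤ η := by
    intro t ht0 htT
    have hsplit : Complex.exp (-Complex.I * lam * t)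
        = Complex.exp (-Complex.I * lam' * t) * Complex.exp (-Complex.I * δ * t) := by
      rw [← Complex.exp_add]; congr 1; rw [hδ]; ring
    have hfac : Complex.exp (-Complex.I * lam * t) - Complex.exp (-Complex.I * lam' * t)
        = Complex.exp (-Complex.I * lam' * t) * (Complex.exp (-Complex.I * δ * t) - 1) := by
      rw [hsplit]; ring
    have h4 := h t ht0
    rw [hfac, norm_mul, abs_exp_aux] at h4
    have hlb := hE'lb t ht0 htT
    have hpos : (0:ℝ) < Real.exp (-2) := Real.exp_pos _
    have h5 : Real.exp (-2) * ‖Complex.exp (-Complex.I * δ * t) - 1‖ ≤ ε := by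
      calc Real.exp (-2) * ‖Complex.exp (-Complex.I * δ * t) - 1‖
          ≤ Real.exp (lam'.im * t) * ‖Complex.exp (-Complex.I * δ * t) - 1‖ := by
            apply mul_le_mul_of_nonneg_right hlb (norm_nonneg _)
        _ ≤ ε := h4
    have h6 : ‖Complex.exp (-Complex.I * δ * t) - 1‖ ≤ ε / Real.exp (-2) := by
      rw [le_div_iff₀ hpos]; linarith
    calc ‖Complex.exp (-Complex.I * δ * t) - 1‖ ≤ ε / Real.exp (-2) := h6
      _ = η := by rw [Real.exp_neg, div_eq_mul_inv, inv_inv, hη, mul_comm]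
  -- Step 5 : bound on |Im δ| * T
  have hqT : |δ.im * T| ≤ 2 * η := by
    have h4 := hkey T (le_of_lt hT) le_rfl
    have h3 := abs_norm_sub_norm_le (Complex.exp (-Complex.I * δ * (T:ℝ))) 1
    rw [abs_exp_aux, norm_one] at h3
    have h5 := h3.trans h4
    rw [abs_le] at h5
    set x := δ.im * T with hx
    have hup : x ≤ η := by
      have := Real.add_one_le_exp x
      linarith [h5.2]
    have hlow : -x ≤ 2 * η := by
      have hA : 1 - η ≤ Real.exp x := by linarith [h5.1]
      have hB := Real.add_one_le_exp (-x)
      have hC : Real.exp (-x) * Real.exp x = 1 := by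
        rw [← Real.exp_add]; simp
      nlinarith [Real.exp_pos x, Real.exp_pos (-x)]
    rw [abs_le]; constructor <;> linarith
  -- Step 6 : |Re δ| * T ≤ π/2
  have hpT : |δ.re| * T ≤ π / 2 := by
    by_contra hcon
    push_neg at hcon
    have hp0 : δ.re ≠ 0 := by
      intro h0
      have hz : |δ.re| * T = 0 := by rw [h0]; simp
      rw [hz] at hcon
      linarith [Real.pi_pos]
    have hpabs : 0 < |δ.re| := abs_pos.2 hp0
    set t₀ : ℝ := (π/2) / |δ.re| with ht₀
    have ht₀0 : 0 ≤ t₀ := by positivity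
    have ht₀T : t₀ ≤ T := by
      rw [ht₀, div_le_iff₀ hpabs]
      nlinarith
    have h4 := hkey t₀ ht₀0 ht₀T
    have hcos : Real.cos (δ.re * t₀) = 0 := by
      rcases lt_or_gt_of_ne hp0 with hp | hp
      · have : δ.re * t₀ = -(π/2) := by
          rw [ht₀, abs_of_neg hp]; field_simp
        rw [this, Real.cos_neg, Real.cos_pi_div_two]
      · have : δ.re * t₀ = π/2 := by
          rw [ht₀, abs_of_pos hp]; field_simp
        rw [this, Real.cos_pi_div_two]
    have hre : (Complex.exp (-Complex.I * δ * t₀) - 1).re = -1 := by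
      rw [Complex.sub_re, Complex.one_re, Complex.exp_re, re_aux, im_aux,
        Real.cos_neg, hcos]
      ring
    have h5 := Complex.abs_re_le_norm (Complex.exp (-Complex.I * δ * t₀) - 1)
    rw [hre] at h5
    rw [abs_neg, abs_one] at h5
    linarith [h5.trans h4]
  -- Step 7 : |Re δ| * T ≤ (3π/2) η
  have hsinb : |δ.re| * T ≤ 3 * π / 2 * η := by
    have h4 := hkey T (le_of_lt hT) le_rfl
    have h5 := Complex.abs_im_le_norm (Complex.exp (-Complex.I * δ * (T:ℝ)) - 1)
    have him : (Complex.exp (-Complex.I * δ * (T:ℝ)) - 1).im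
        = -(Real.exp (δ.im * T) * Real.sin (δ.re * T)) := by
      rw [Complex.sub_im, Complex.one_im, Complex.exp_im, re_aux, im_aux, Real.sin_neg]
      ring
    rw [him] at h5
    have h6 : Real.exp (δ.im * T) * |Real.sin (δ.re * T)| ≤ η := by
      rw [← abs_of_pos (Real.exp_pos (δ.im * T)), ← abs_mul]
      calc |Real.exp (δ.im * T) * Real.sin (δ.re * T)|
          = |-(Real.exp (δ.im * T) * Real.sin (δ.re * T))| := (abs_neg _).symm
        _ ≤ ‖Complex.exp (-Complex.I * δ * (T:ℝ)) - 1‖ := h5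
        _ ≤ η := h4
    have hq1 : -1 ≤ δ.im * T := by
      have := abs_le.1 hqT
      linarith [this.1]
    have hexplb : (1:ℝ)/3 ≤ Real.exp (δ.im * T) := by
      have := Real.exp_le_exp.2 hq1
      have h8 : (1:ℝ)/3 ≤ Real.exp (-1) := by
        have hx : Real.exp (-1) * Real.exp 1 = 1 := by rw [← Real.exp_add]; simp
        nlinarith [Real.exp_pos (-1)]
      calc (1:ℝ)/3 ≤ Real.exp (-1) := h8
        _ ≤ Real.exp (δ.im * T) := Real.exp_le_exp.2 hq1
    have hsin3 : |Real.sin (δ.re * T)| ≤ 3 * η := by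
      nlinarith [abs_nonneg (Real.sin (δ.re * T))]
    -- use concavity of sin
    have habsmul : |δ.re * T| = |δ.re| * T := by
      rw [abs_mul, abs_of_pos hT]
    have hsinlb : 2 / π * (|δ.re| * T) ≤ |Real.sin (δ.re * T)| := by
      have h9 : 2 / π * |δ.re * T| ≤ Real.sin |δ.re * T| :=
        Real.mul_le_sin (abs_nonneg _) (by rw [habsmul]; exact hpT)
      rw [habsmul] at h9
      refine h9.trans ?_
      rw [← habsmul]
      rcases abs_cases (δ.re * T) with ⟨he, _⟩ | ⟨he, _⟩
      · rw [he]; exact le_abs_self _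
      · rw [he, Real.sin_neg]; exact neg_le_abs _
    have hππ : 0 < π := Real.pi_pos
    have h10 : 2 / π * (|δ.re| * T) ≤ 3 * η := hsinlb.trans hsin3
    calc |δ.re| * T = π / 2 * (2 / π * (|δ.re| * T)) := by field_simp
      _ ≤ π / 2 * (3 * η) := by
          apply mul_le_mul_of_nonneg_left h10 (by positivity)
      _ = 3 * π / 2 * η := by ring
  -- Step 8 : conclude
  have habs : ‖δ‖ ≤ |δ.re| + |δ.im| := Complex.norm_le_abs_re_add_abs_im δ
  have hTabs : T * |lam.im| = 1 := by
    rw [abs_of_neg hneg, hTdef]; field_simp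
  have hπ315 : π < 3.15 := by
    have := Real.pi_lt_d2; linarith
  have hq2 : |δ.im| * T ≤ 2 * η := by
    rw [← abs_of_pos hT, ← abs_mul]; exact hqT
  have hsum : (|δ.re| + |δ.im|) * T ≤ 7 * η := by
    have : 3 * π / 2 * η + 2 * η ≤ 7 * η := by nlinarith
    nlinarith [hsinb, hq2]
  calc ‖δ‖ = ‖δ‖ * (T * |lam.im|) := by rw [hTabs, mul_one]
    _ ≤ (|δ.re| + |δ.im|) * T * |lam.im| := by
        rw [← mul_assoc]
        apply mul_le_mul_of_nonneg_right _ (abs_nonneg _)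
        apply mul_le_mul_of_nonneg_right habs (le_of_lt hT)
    _ ≤ 7 * η * |lam.im| := by
        apply mul_le_mul_of_nonneg_right hsum (abs_nonneg _)
    _ = 7 * Real.exp 2 * ε * |lam.im| := by rw [hη]; ring

/-- Uniqueness of the resonance energy: two quasi-exponential representations
of the same function on `[0,∞)`, each with amplitude `1 + O(κ²)` and remainder
`O(κ²)`, have frequencies agreeing up to `O(κ² |Im λ|)`. -/
theorem stmt0 :
    ∀ c : ℝ, 0 < c →
    ∃ C : ℝ, 0 < C ∧ ∃ κ₀ : ℝ, 0 < κ₀ ∧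
      ∀ κ : ℝ, 0 < κ → κ ≤ κ₀ →
      ∀ lam lam' : ℂ, lam.im ≤ 0 → lam'.im ≤ 0 →
        0 < max |lam.im| |lam'.im| →
      ∀ a a' : ℂ, ‖a - 1‖ ≤ c * κ ^ 2 →
        ‖a' - 1‖ ≤ c * κ ^ 2 →
      ∀ b b' : ℝ → ℂ,
        (∀ t : ℝ, 0 ≤ t → ‖b t‖ ≤ c * κ ^ 2) →
        (∀ t : ℝ, 0 ≤ t → ‖b' t‖ ≤ c * κ ^ 2) →
        (∀ t : ℝ, 0 ≤ t →
          a * Complex.exp (-Complex.I * lam * t) + b t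
            = a' * Complex.exp (-Complex.I * lam' * t) + b' t) →
      ‖lam - lam'‖ ≤ C * κ ^ 2 * |lam.im| := by

  intro c hc
  refine ⟨28 * Real.exp 2 * c, by positivity, Real.sqrt (1 / (8 * Real.exp 2 * c)), by positivity, ?_⟩
  intro κ hκ0 hκκ₀ lam lam' hl hl' hmax a a' ha ha' b b' hb hb' heq
  have hκsq : κ ^ 2 ≤ 1 / (8 * Real.exp 2 * c) := by
    have h1 : κ ^ 2 ≤ Real.sqrt (1 / (8 * Real.exp 2 * c)) ^ 2 := by
      apply pow_le_pow_left₀ (le_of_lt hκ0) hκκ₀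
    rwa [Real.sq_sqrt (by positivity)] at h1
  have hεs : Real.exp 2 * (4 * c * κ ^ 2) ≤ 1 / 2 := by
    have h2 : Real.exp 2 * c * κ ^ 2 ≤ Real.exp 2 * c * (1 / (8 * Real.exp 2 * c)) := by
      apply mul_le_mul_of_nonneg_left hκsq (by positivity)
    have h3 : Real.exp 2 * c * (1 / (8 * Real.exp 2 * c)) = 1 / 8 := by
      field_simp
    nlinarith
  have hptw : ∀ t : ℝ, 0 ≤ t →
      ‖Complex.exp (-Complex.I * lam * t) - Complex.exp (-Complex.I * lam' * t)‖
        ≤ 4 * c * κ ^ 2 := by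
    intro t ht
    set E := Complex.exp (-Complex.I * lam * t) with hE
    set E' := Complex.exp (-Complex.I * lam' * t) with hE'
    have hEb : ‖E‖ ≤ 1 := by
      rw [hE, abs_exp_aux]
      calc Real.exp (lam.im * t) ≤ Real.exp 0 :=
            Real.exp_le_exp.2 (mul_nonpos_of_nonpos_of_nonneg hl ht)
        _ = 1 := Real.exp_zero
    have hE'b : ‖E'‖ ≤ 1 := by
      rw [hE', abs_exp_aux]
      calc Real.exp (lam'.im * t) ≤ Real.exp 0 :=
            Real.exp_le_exp.2 (mul_nonpos_of_nonpos_of_nonneg hl' ht)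
        _ = 1 := Real.exp_zero
    have hid : E - E' = -((a - 1) * E) + (a' - 1) * E' + (b' t - b t) := by
      have h0 := heq t ht
      have : a * E + b t = a' * E' + b' t := h0
      linear_combination this
    rw [hid]
    calc ‖-((a - 1) * E) + (a' - 1) * E' + (b' t - b t)‖
        ≤ ‖-((a - 1) * E) + (a' - 1) * E'‖ + ‖b' t - b t‖ :=
          norm_add_le _ _
      _ ≤ (‖-((a - 1) * E)‖ + ‖(a' - 1) * E'‖)
            + (‖b' t‖ + ‖b t‖) := by
          gcongr
          · exact norm_add_le _ _
          · have hsb : ‖b' t - b t‖ ≤ ‖b' t‖ + ‖-(b t)‖ := by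
              rw [show b' t - b t = b' t + -(b t) by ring]
              exact norm_add_le _ _
            rwa [norm_neg] at hsb
      _ ≤ (c * κ ^ 2 * 1 + c * κ ^ 2 * 1) + (c * κ ^ 2 + c * κ ^ 2) := by
          gcongr
          · rw [norm_neg, norm_mul]
            exact mul_le_mul ha hEb (norm_nonneg _) (by positivity)
          · rw [norm_mul]
            exact mul_le_mul ha' hE'b (norm_nonneg _) (by positivity)
          · exact hb' t ht
          · exact hb t ht
      _ = 4 * c * κ ^ 2 := by ring
  have hkey := key_lemma lam lam' hl hl' hmax (4 * c * κ ^ 2) (by positivity) hεs hptw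
  calc ‖lam - lam'‖
      ≤ 7 * Real.exp 2 * (4 * c * κ ^ 2) * |lam.im| := hkey
    _ = 28 * Real.exp 2 * c * κ ^ 2 * |lam.im| := by ring
end

section
/- For all nonzero w₁, w₂ ∈ ℂ there exists an integer k such that |Log(w₁/w₂) − 2πik| ≤ ((2+π)/2) · |w₁ − w₂| / min(|w₁|, |w₂|). -/
open Complex Real

set_option maxHeartbeats 1000000 in

/-- The distance from `Log(w₁/w₂)` to the lattice `2πiℤ` is controlled by the
relative distance of `w₁` and `w₂`. -/
theorem stmt1 (w₁ w₂ : ℂ) (h₁ : w₁ ≠ 0) (h₂ : w₂ ≠ 0) :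
    ∃ k : ℤ, ‖Complex.log (w₁ / w₂) - 2 * Real.pi * Complex.I * k‖
      ≤ ((2 + Real.pi) / 2) * ‖w₁ - w₂‖
        / min ‖w₁‖ ‖w₂‖ := by
  use 0
  simp only [Int.cast_zero, mul_zero, sub_zero]
  set a := ‖w₁‖ with ha_def
  set b := ‖w₂‖ with hb_def
  set W := ‖w₁ - w₂‖ with hW_def
  set m := min a b with hm_def
  have ha : 0 < a := norm_pos_iff.mpr h₁
  have hb : 0 < b := norm_pos_iff.mpr h₂
  have hm : 0 < m := lt_min ha hb
  have hW0 : 0 ≤ W := norm_nonneg _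
  have hπ : 0 < Real.pi := Real.pi_pos
  set z := w₁ / w₂ with hz_def
  have hz : z ≠ 0 := div_ne_zero h₁ h₂
  have habsz : ‖z‖ = a / b := norm_div w₁ w₂
  have hab : |a - b| ≤ W := abs_norm_sub_norm_le w₁ w₂
  have hma : m ≤ a := min_le_left _ _
  have hmb : m ≤ b := min_le_right _ _
  -- real part bound
  have hre : |Real.log a - Real.log b| ≤ W / m := by
    rw [abs_le]
    constructor
    · have h1 : Real.log b - Real.log a ≤ W / m := by
        rw [← Real.log_div hb.ne' ha.ne']
        calc Real.log (b / a) ≤ b / a - 1 := Real.log_le_sub_one_of_pos (by positivity)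
          _ = (b - a) / a := by field_simp
          _ ≤ W / a := by
            gcongr
            calc b - a ≤ |a - b| := by rw [abs_sub_comm]; exact le_abs_self _
              _ ≤ W := hab
          _ ≤ W / m := div_le_div_of_nonneg_left hW0 hm hma
      linarith
    · rw [← Real.log_div ha.ne' hb.ne']
      calc Real.log (a / b) ≤ a / b - 1 := Real.log_le_sub_one_of_pos (by positivity)
        _ = (a - b) / b := by field_simp
        _ ≤ W / b := by
          gcongr
          exact (le_abs_self _).trans hab
        _ ≤ W / m := div_le_div_of_nonneg_left hW0 hm hmb
  -- imaginary part bound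
  set θ := Complex.arg z with hθ_def
  set r := a / b with hr_def
  have hr0 : 0 < r := by positivity
  have hθπ : |θ| ≤ Real.pi := Complex.abs_arg_le_pi z
  have hcos : Real.cos θ ≤ 1 - 2 / Real.pi ^ 2 * θ ^ 2 :=
    Real.cos_le_one_sub_mul_cos_sq hθπ
  have hcos1 : Real.cos θ ≤ 1 := Real.cos_le_one θ
  have hzre : z.re = r * Real.cos θ := by
    rw [← Complex.norm_mul_cos_arg z, habsz]
  have hzim : z.im = r * Real.sin θ := by
    rw [← Complex.norm_mul_sin_arg z, habsz]
  have hpyth : Real.sin θ ^ 2 + Real.cos θ ^ 2 = 1 := Real.sin_sq_add_cos_sq θ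
  have hsub : z - 1 = (w₁ - w₂) / w₂ := by
    rw [hz_def, div_sub_one h₂]
  have habs_sub : ‖z - 1‖ = W / b := by
    rw [hsub, norm_div]
  have hsq : (W / b) ^ 2 = r ^ 2 - 2 * r * Real.cos θ + 1 := by
    rw [← habs_sub, Complex.sq_norm, Complex.normSq_apply, Complex.sub_re, Complex.sub_im,
      Complex.one_re, Complex.one_im, hzre, hzim]
    nlinarith [hpyth]
  have hmin : min r 1 = m / b := by
    rw [hr_def, show (1 : ℝ) = b / b by field_simp, min_div_div_right hb.le, hm_def]
  have hkey : (min r 1) ^ 2 * (2 - 2 * Real.cos θ) ≤ r ^ 2 - 2 * r * Real.cos θ + 1 := by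
    rcases le_total r 1 with h | h
    · rw [min_eq_left h]
      nlinarith [mul_nonneg (sub_nonneg.2 h) (by nlinarith [Real.neg_one_le_cos θ] :
        (0:ℝ) ≤ 1 + r - 2 * r * Real.cos θ)]
    · rw [min_eq_right h]
      nlinarith [mul_nonneg (sub_nonneg.2 h) (by nlinarith [Real.neg_one_le_cos θ] :
        (0:ℝ) ≤ r + 1 - 2 * Real.cos θ)]
  have hθsq : θ ^ 2 * (m / b) ^ 2 ≤ (Real.pi / 2) ^ 2 * (W / b) ^ 2 := by
    rw [← hmin, hsq]
    have hπ2 : (0:ℝ) < Real.pi ^ 2 := by positivity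
    have h' : 2 / Real.pi ^ 2 * θ ^ 2 ≤ 1 - Real.cos θ := by linarith
    rw [div_mul_eq_mul_div, div_le_iff₀ hπ2] at h'
    have hmin0 : 0 ≤ (min r 1) ^ 2 := sq_nonneg _
    have k1 := mul_le_mul_of_nonneg_left h' hmin0
    have k2 := mul_le_mul_of_nonneg_left hkey (by positivity : (0:ℝ) ≤ Real.pi ^ 2 / 4)
    nlinarith [k1, k2]
  have him : |θ| * m ≤ Real.pi / 2 * W := by
    have hXY : (|θ| * m) ^ 2 ≤ (Real.pi / 2 * W) ^ 2 := by
      have hb2 : 0 < b ^ 2 := by positivity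
      have := mul_le_mul_of_nonneg_right hθsq hb2.le
      calc (|θ| * m) ^ 2 = θ ^ 2 * (m / b) ^ 2 * b ^ 2 := by
            rw [mul_pow, _root_.sq_abs]; field_simp
        _ ≤ (Real.pi / 2) ^ 2 * (W / b) ^ 2 * b ^ 2 := this
        _ = (Real.pi / 2 * W) ^ 2 := by field_simp
    have h1 : 0 ≤ |θ| * m := by positivity
    have h2 : 0 ≤ Real.pi / 2 * W := by positivity
    nlinarith [hXY, h1, h2]
  -- combine
  have hlogre : (Complex.log z).re = Real.log a - Real.log b := by
    rw [Complex.log_re, habsz, Real.log_div ha.ne' hb.ne']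
  have hlogim : (Complex.log z).im = θ := Complex.log_im z
  calc ‖Complex.log z‖
      ≤ |(Complex.log z).re| + |(Complex.log z).im| := Complex.norm_le_abs_re_add_abs_im _
    _ = |Real.log a - Real.log b| + |θ| := by rw [hlogre, hlogim]
    _ ≤ W / m + Real.pi / 2 * W / m := by
        have : |θ| ≤ Real.pi / 2 * W / m := by
          rw [le_div_iff₀ hm]; exact him
        linarith
    _ = (2 + Real.pi) / 2 * W / m := by ring
end

section
/- Let r > 0, λ ∈ ℝ, c > 0 and a ≥ 0. Then there exist κ₀ > 0 and C > 0 such that for every κ ∈ (0, κ₀], every λ₁ ∈ ℝ with |λ₁ − λ| ≤ aκ, and every function F analytic on the open disc U_r(λ) = {z ∈ ℂ : |z − λ| < r} satisfying |F(z)| ≤ c, |F′(z)| ≤ c and Im F(z) < 0 for all z ∈ U_r(λ), the function z ↦ λ₁ + κ²F(z) − z has exactly one zero λ_κ in U_r(λ); moreover Im λ_κ ≤ 0 and |λ_κ − (λ₁ + κ²F(λ₁))| ≤ C κ⁴. -/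
open Complex Real Metric

/-- Location of the resonance: `z ↦ λ₁ + κ²F(z) − z` has exactly one zero
`λ_κ` in the disc `U_r(λ)`; it lies in the closed lower half-plane and is
within `O(κ⁴)` of `λ₁ + κ²F(λ₁)`. -/
theorem stmt5 (r : ℝ) (hr : 0 < r) (lam : ℝ) (c : ℝ) (hc : 0 < c)
    (a : ℝ) (ha : 0 ≤ a) :
    ∃ κ₀ : ℝ, 0 < κ₀ ∧ ∃ C : ℝ, 0 < C ∧
      ∀ κ : ℝ, 0 < κ → κ ≤ κ₀ →
      ∀ lam₁ : ℝ, |lam₁ - lam| ≤ a * κ →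
      ∀ F : ℂ → ℂ, DifferentiableOn ℂ F (Metric.ball (lam : ℂ) r) →
        (∀ z ∈ Metric.ball (lam : ℂ) r, ‖F z‖ ≤ c) →
        (∀ z ∈ Metric.ball (lam : ℂ) r, ‖deriv F z‖ ≤ c) →
        (∀ z ∈ Metric.ball (lam : ℂ) r, (F z).im < 0) →
      ∃ lamκ : ℂ, lamκ ∈ Metric.ball (lam : ℂ) r ∧
        (lam₁ + κ ^ 2 * F lamκ - lamκ = 0) ∧
        (∀ z ∈ Metric.ball (lam : ℂ) r, lam₁ + κ ^ 2 * F z - z = 0 → z = lamκ) ∧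
        lamκ.im ≤ 0 ∧
        ‖lamκ - (lam₁ + κ ^ 2 * F lam₁)‖ ≤ C * κ ^ 4 := by
  refine ⟨min 1 (min (r / (2 * (a + c + 1))) (1 / (2 * c))), ?_, c ^ 2, by positivity, ?_⟩
  · have : 0 < a + c + 1 := by linarith
    positivity
  intro κ hκ hκ0 lam₁ hlam₁ F hF hFb hF'b hFim
  have hκ1 : κ ≤ 1 := hκ0.trans (min_le_left _ _)
  have hκr : κ * (a + c + 1) ≤ r / 2 := by
    have h1 : κ ≤ r / (2 * (a + c + 1)) := hκ0.trans ((min_le_right _ _).trans (min_le_left _ _))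
    have h2 : 0 < a + c + 1 := by linarith
    rw [le_div_iff₀ (by positivity)] at h1
    nlinarith
  have hκc : κ * c ≤ 1 / 2 := by
    have h1 : κ ≤ 1 / (2 * c) := hκ0.trans ((min_le_right _ _).trans (min_le_right _ _))
    rw [le_div_iff₀ (by positivity)] at h1
    linarith
  have hκ2c : κ ^ 2 * c ≤ 1 / 2 := by nlinarith
  -- basic distances
  have hd : dist (lam₁ : ℂ) (lam : ℂ) = |lam₁ - lam| := by
    rw [Complex.dist_eq, ← Complex.ofReal_sub, Complex.norm_real, Real.norm_eq_abs]
  have hlam₁mem : (lam₁ : ℂ) ∈ Metric.ball (lam : ℂ) r := by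
    rw [mem_ball, hd]
    have : a * κ ≤ κ * (a + c + 1) := by nlinarith
    linarith [hlam₁.trans this, hκr]
  set s : Set ℂ := Metric.closedBall (lam₁ : ℂ) (κ ^ 2 * c) with hs
  have hsub : s ⊆ Metric.ball (lam : ℂ) r := by
    intro z hz
    rw [Metric.mem_closedBall] at hz
    rw [mem_ball]
    calc dist z (lam : ℂ) ≤ dist z (lam₁ : ℂ) + dist (lam₁ : ℂ) (lam : ℂ) := dist_triangle _ _ _
      _ ≤ κ ^ 2 * c + a * κ := by rw [hd]; exact add_le_add hz hlam₁
      _ ≤ κ * (a + c + 1) := by nlinarith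
      _ < r := by linarith
  set g : ℂ → ℂ := fun z => (lam₁ : ℂ) + (κ : ℂ) ^ 2 * F z with hg
  -- Lipschitz estimate for F on the ball
  have hFdiff : ∀ x ∈ Metric.ball (lam : ℂ) r, DifferentiableAt ℂ F x := fun x hx =>
    hF.differentiableAt (isOpen_ball.mem_nhds hx)
  have hFlip : ∀ z ∈ Metric.ball (lam : ℂ) r, ∀ w ∈ Metric.ball (lam : ℂ) r,
      ‖F z - F w‖ ≤ c * ‖z - w‖ := by
    intro z hz w hw
    exact (convex_ball _ _).norm_image_sub_le_of_norm_deriv_le hFdiff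
      (fun x hx => by exact hF'b x hx) hw hz
  have hglip : ∀ z ∈ Metric.ball (lam : ℂ) r, ∀ w ∈ Metric.ball (lam : ℂ) r,
      ‖g z - g w‖ ≤ (κ ^ 2 * c) * ‖z - w‖ := by
    intro z hz w hw
    have : g z - g w = (κ : ℂ) ^ 2 * (F z - F w) := by simp [hg]; ring
    rw [this, norm_mul]
    have h1 : ‖(κ : ℂ) ^ 2‖ = κ ^ 2 := by
      rw [norm_pow, Complex.norm_real, Real.norm_eq_abs, abs_of_pos hκ]
    rw [h1, mul_assoc]
    exact mul_le_mul_of_nonneg_left (hFlip z hz w hw) (by positivity)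
  -- g maps s into s
  have hsf : Set.MapsTo g s s := by
    intro z hz
    rw [hs, Metric.mem_closedBall, dist_eq_norm]
    have : g z - (lam₁ : ℂ) = (κ : ℂ) ^ 2 * F z := by simp [hg]
    rw [this, norm_mul]
    have h1 : ‖(κ : ℂ) ^ 2‖ = κ ^ 2 := by
      rw [norm_pow, Complex.norm_real, Real.norm_eq_abs, abs_of_pos hκ]
    rw [h1]
    exact mul_le_mul_of_nonneg_left (by exact hFb z (hsub hz))
      (by positivity)
  -- contraction
  set K : NNReal := (κ ^ 2 * c).toNNReal with hK
  have hKc : (K : ℝ) = κ ^ 2 * c := Real.coe_toNNReal _ (by positivity)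
  have hK1 : K < 1 := by
    rw [← NNReal.coe_lt_coe, hKc, NNReal.coe_one]; linarith
  have hliponK : LipschitzOnWith K g s := by
    rw [lipschitzOnWith_iff_dist_le_mul]
    intro z hz w hw
    rw [dist_eq_norm, dist_eq_norm, hKc]
    exact hglip z (hsub hz) w (hsub hw)
  have hcontr : ContractingWith K (hsf.restrict g s s) :=
    ⟨hK1, hliponK.mapsToRestrict hsf⟩
  have hsc : IsComplete s := (isClosed_closedBall).isComplete
  have hx0 : (lam₁ : ℂ) ∈ s := by
    rw [hs, Metric.mem_closedBall, dist_self]; positivity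
  obtain ⟨y, hys, hyfix, -, -⟩ :=
    hcontr.exists_fixedPoint' hsc hsf hx0 (edist_ne_top _ _)
  have hymem : y ∈ Metric.ball (lam : ℂ) r := hsub hys
  have hyeq : (lam₁ : ℂ) + (κ : ℂ) ^ 2 * F y = y := hyfix
  refine ⟨y, hymem, by rw [hyeq]; ring, ?_, ?_, ?_⟩
  · -- uniqueness
    intro z hz hzero
    have hzg : g z = z := by
      have : (lam₁ : ℂ) + (κ : ℂ) ^ 2 * F z = z := by
        have := sub_eq_zero.mp hzero; exact this
      simpa [hg] using this
    by_contra hne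
    have hpos : 0 < ‖z - y‖ := by
      rw [norm_pos_iff, sub_ne_zero]; exact hne
    have := hglip z hz y hymem
    rw [hzg, show g y = y from hyeq] at this
    nlinarith
  · -- imaginary part
    have him : y.im = κ ^ 2 * (F y).im := by
      conv_lhs => rw [← hyeq]
      simp [Complex.add_im, Complex.mul_im, ← Complex.ofReal_pow]
    rw [him]
    have := hFim y hymem
    nlinarith
  · -- estimate
    have hdiff : y - ((lam₁ : ℂ) + (κ : ℂ) ^ 2 * F lam₁) = (κ : ℂ) ^ 2 * (F y - F lam₁) := by
      conv_lhs => rw [← hyeq]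
      ring
    rw [hdiff, norm_mul]
    have h1 : ‖(κ : ℂ) ^ 2‖ = κ ^ 2 := by
      rw [norm_pow, Complex.norm_real, Real.norm_eq_abs, abs_of_pos hκ]
    rw [h1]
    have h2 : ‖F y - F lam₁‖ ≤ c * ‖y - (lam₁ : ℂ)‖ := hFlip y hymem _ hlam₁mem
    have h3 : ‖y - (lam₁ : ℂ)‖ ≤ κ ^ 2 * c := by
      rw [← dist_eq_norm]; exact Metric.mem_closedBall.mp hys
    calc κ ^ 2 * ‖F y - F lam₁‖ ≤ κ ^ 2 * (c * (κ ^ 2 * c)) := by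
          refine mul_le_mul_of_nonneg_left (h2.trans ?_) (by positivity)
          exact mul_le_mul_of_nonneg_left h3 hc.le
      _ = c ^ 2 * κ ^ 4 := by ring
end

section
/- Let k ∈ ℕ and M > 0. Then there exists C > 0, depending only on k and M, with the following property: if U ⊆ ℝ is open and B : ℝ → ℂ is k-times continuously differentiable on U with B(E) ≠ E, |B(E) − E| ≤ M, and |B^{(j)}(E)| ≤ M for all 1 ≤ j ≤ k and all E ∈ U, then for every E ∈ U the k-th derivative of G(E) := (B(E) − E)^{−1} satisfies |G^{(k)}(E)| · |B(E) − E|^{k+1} ≤ C. -/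
open Complex Real

private lemma aux8 (M : ℝ) (hM : 0 < M) : ∀ n : ℕ, ∃ C : ℝ, 0 < C ∧
    ∀ U : Set ℝ, IsOpen U →
    ∀ B : ℝ → ℂ, ContDiffOn ℝ n B U →
      (∀ E ∈ U, B E ≠ (E : ℂ)) →
      (∀ E ∈ U, ‖B E - E‖ ≤ M) →
      (∀ j : ℕ, 1 ≤ j → j ≤ n → ∀ E ∈ U, ‖iteratedDerivWithin j B U E‖ ≤ M) →
    ∀ m : ℕ, m ≤ n → ∀ E ∈ U,
      ‖iteratedDerivWithin m (fun E' : ℝ => (B E' - E')⁻¹) U E‖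
          * ‖B E - E‖ ^ (m + 1) ≤ C := by
  intro n
  induction n with
  | zero =>
    refine ⟨1, one_pos, ?_⟩
    intro U hU B hB hne hbd hder m hm E hE
    interval_cases m
    have h0 : B E - (E : ℂ) ≠ 0 := sub_ne_zero.mpr (hne E hE)
    simp only [iteratedDerivWithin_zero, norm_inv, zero_add, pow_one]
    rw [inv_mul_cancel₀ (norm_ne_zero_iff.mpr h0)]
  | succ n IH =>
    obtain ⟨C, hC, H⟩ := IH
    set M' : ℝ := max 1 M with hM'def
    have hM'1 : (1:ℝ) ≤ M' := le_max_left _ _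
    have hMM' : M ≤ M' := le_max_right _ _
    refine ⟨max C ((M' + 2) ^ n * ((M + 1) * C ^ 2)), lt_max_of_lt_left hC, ?_⟩
    intro U hU B hB hne hbd hder m hm E hE
    have hU' : UniqueDiffOn ℝ U := hU.uniqueDiffOn
    -- previous-level hypotheses
    have hBn : ContDiffOn ℝ n B U := hB.of_le (by exact_mod_cast Nat.le_succ n)
    have hdern : ∀ j : ℕ, 1 ≤ j → j ≤ n → ∀ E ∈ U,
        ‖iteratedDerivWithin j B U E‖ ≤ M :=
      fun j h1 h2 => hder j h1 (h2.trans (Nat.le_succ n))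
    have Hn := H U hU B hBn hne hbd hdern
    rcases Nat.lt_succ_iff_lt_or_eq.mp (Nat.lt_succ_of_le hm) with hmn | rfl
    · exact le_trans (Hn m (Nat.lt_succ_iff.mp hmn) E hE) (le_max_left _ _)
    -- main case m = n + 1
    set f : ℝ → ℂ := fun y => B y - (y : ℂ) with hfdef
    set G : ℝ → ℂ := fun E' : ℝ => (B E' - E')⁻¹ with hGdef
    have hf0 : ∀ y ∈ U, f y ≠ 0 := fun y hy => sub_ne_zero.mpr (hne y hy)
    have hfC : ContDiffOn ℝ (n + 1 : ℕ) f U := by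
      exact hB.sub (Complex.ofRealCLM.contDiff.contDiffOn : ContDiffOn ℝ _ (fun y : ℝ => (y : ℂ)) U)
    have hGC : ContDiffOn ℝ (n + 1 : ℕ) G U := hfC.inv hf0
    have hGCn : ContDiffOn ℝ (n : ℕ) G U := hGC.of_le (by exact_mod_cast Nat.le_succ n)
    set B' : ℝ → ℂ := fun y => derivWithin B U y with hB'def
    set h : ℝ → ℂ := fun y => 1 - B' y with hhdef
    set p : ℝ → ℂ := fun y => G y * G y with hpdef
    have hB'C : ContDiffOn ℝ (n : ℕ) B' U := hB.derivWithin hU' (by exact_mod_cast le_rfl)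
    have hhC : ContDiffOn ℝ (n : ℕ) h U := contDiffOn_const.sub hB'C
    have hpC : ContDiffOn ℝ (n : ℕ) p U := hGCn.mul hGCn
    set a : ℝ := ‖B E - E‖ with hadef
    have ha : 0 < a := by
      simpa [hadef] using (norm_pos_iff.mpr (hf0 E hE))
    have haM : a ≤ M := hbd E hE
    set b : ℝ := a⁻¹ with hbdef
    have hb : 0 < b := inv_pos.mpr ha
    have hab : a * b = 1 := mul_inv_cancel₀ ha.ne'
    -- derivative formula for G on U
    have hderivG : Set.EqOn (derivWithin G U) (fun y => h y * p y) U := by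
      intro y hy
      have hfy : DifferentiableWithinAt ℝ f U y :=
        hfC.differentiableOn (by simp) y hy
      have hBy : DifferentiableWithinAt ℝ B U y :=
        hB.differentiableOn (by simp) y hy
      have hfy' : HasDerivWithinAt f (B' y - 1) U y := by
        have h1 : HasDerivWithinAt B (B' y) U y := hBy.hasDerivWithinAt
        have h2 : HasDerivWithinAt (fun y : ℝ => (y : ℂ)) 1 U y := by
          exact (Complex.ofRealCLM.hasDerivAt (x := y)).hasDerivWithinAt
        exact h1.sub h2
      have hinv : HasFDerivAt (fun z : ℂ => z⁻¹)
          (((1 : ℂ →L[ℂ] ℂ).smulRight (-((f y) ^ 2)⁻¹)).restrictScalars ℝ) (f y) :=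
        ((hasDerivAt_inv (hf0 y hy)).hasFDerivAt).restrictScalars ℝ
      have hGy : HasDerivWithinAt G ((B' y - 1) • (-((f y) ^ 2)⁻¹)) U y := by
        have := hinv.comp_hasDerivWithinAt y hfy'
        simpa [Function.comp_def, hGdef, hfdef] using this
      have := hGy.derivWithin (hU'.uniqueDiffWithinAt hy)
      rw [this]
      have hz : f y ≠ 0 := hf0 y hy
      show (B' y - 1) • (-((f y) ^ 2)⁻¹) = (1 - B' y) * ((f y)⁻¹ * (f y)⁻¹)
      rw [smul_eq_mul, ← mul_inv, ← pow_two]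
      ring
    -- bounds on iterated derivatives of G up to order n
    have hGb : ∀ j : ℕ, j ≤ n → ‖iteratedDerivWithin j G U E‖ ≤ C * b ^ (j + 1) := by
      intro j hj
      have := Hn j hj E hE
      have h2 : ‖iteratedDerivWithin j G U E‖ ≤ C / a ^ (j + 1) :=
        (le_div_iff₀ (pow_pos ha _)).mpr this
      calc ‖iteratedDerivWithin j G U E‖ = ‖iteratedDerivWithin j G U E‖ := rfl
        _ ≤ C / a ^ (j + 1) := h2
        _ = C * b ^ (j + 1) := by rw [div_eq_mul_inv, hbdef, inv_pow]
    -- bounds on iterated derivatives of p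
    have hpb : ∀ m : ℕ, m ≤ n → ‖iteratedFDerivWithin ℝ m p U E‖ ≤ 2 ^ m * (C ^ 2 * b ^ (m + 2)) := by
      intro m hmn
      have hmul := norm_iteratedFDerivWithin_mul_le (𝕜 := ℝ) (N := (n : WithTop ℕ∞))
        hGCn hGCn hU' hE (n := m) (by exact_mod_cast hmn)
      refine hmul.trans ?_
      have hterm : ∀ j ∈ Finset.range (m + 1),
          (m.choose j : ℝ) * ‖iteratedFDerivWithin ℝ j G U E‖ *
            ‖iteratedFDerivWithin ℝ (m - j) G U E‖ ≤
          (m.choose j : ℝ) * (C ^ 2 * b ^ (m + 2)) := by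
        intro j hjr
        have hjm : j ≤ m := Nat.lt_succ_iff.mp (Finset.mem_range.mp hjr)
        have h1 : ‖iteratedFDerivWithin ℝ j G U E‖ ≤ C * b ^ (j + 1) := by
          rw [norm_iteratedFDerivWithin_eq_norm_iteratedDerivWithin]
          exact hGb j (hjm.trans hmn)
        have h2 : ‖iteratedFDerivWithin ℝ (m - j) G U E‖ ≤ C * b ^ (m - j + 1) := by
          rw [norm_iteratedFDerivWithin_eq_norm_iteratedDerivWithin]
          exact hGb (m - j) ((Nat.sub_le m j).trans hmn)
        have hbmul : (C * b ^ (j + 1)) * (C * b ^ (m - j + 1)) = C ^ 2 * b ^ (m + 2) := by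
          have : (j + 1) + (m - j + 1) = m + 2 := by omega
          rw [← this, pow_add]; ring
        calc (m.choose j : ℝ) * ‖iteratedFDerivWithin ℝ j G U E‖ *
              ‖iteratedFDerivWithin ℝ (m - j) G U E‖
            ≤ (m.choose j : ℝ) * (C * b ^ (j + 1)) * (C * b ^ (m - j + 1)) := by
              apply mul_le_mul
              · exact mul_le_mul_of_nonneg_left h1 (Nat.cast_nonneg _)
              · exact h2
              · positivity
              · positivity
          _ = (m.choose j : ℝ) * (C ^ 2 * b ^ (m + 2)) := by rw [mul_assoc, hbmul]
      refine (Finset.sum_le_sum hterm).trans ?_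
      rw [← Finset.sum_mul]
      have : (∑ j ∈ Finset.range (m + 1), (m.choose j : ℝ)) = (2 : ℝ) ^ m := by
        rw [← Nat.cast_sum, Nat.sum_range_choose]
        push_cast; ring
      rw [this]
    -- bounds on iterated derivatives of h
    have hhb : ∀ i : ℕ, i ≤ n → ‖iteratedFDerivWithin ℝ i h U E‖ ≤ M + 1 := by
      intro i hin
      rw [norm_iteratedFDerivWithin_eq_norm_iteratedDerivWithin]
      rcases Nat.eq_zero_or_pos i with rfl | hi
      · rw [iteratedDerivWithin_zero]
        have hB1 : ‖B' E‖ ≤ M := by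
          have := hder 1 le_rfl (Nat.succ_le_succ (Nat.zero_le n)) E hE
          rwa [iteratedDerivWithin_one] at this
        calc ‖h E‖ = ‖1 - B' E‖ := rfl
          _ ≤ ‖(1 : ℂ)‖ + ‖B' E‖ := by
              simpa [sub_eq_add_neg] using
                (norm_add_le (1 : ℂ) (-(B' E)))
          _ ≤ 1 + M := by simp [hB1]
          _ = M + 1 := by ring
      · have e1 : iteratedDerivWithin i h U E = -iteratedDerivWithin i B' U E := by
          rw [hhdef]
          rw [iteratedDerivWithin_const_sub hi (1 : ℂ)]
          exact iteratedDerivWithin_fun_neg B'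
        have e2 : iteratedDerivWithin i B' U E = iteratedDerivWithin (i + 1) B U E :=
          (congrFun iteratedDerivWithin_succ' E).symm
        rw [e1, norm_neg, e2]
        calc ‖iteratedDerivWithin (i + 1) B U E‖
            = ‖iteratedDerivWithin (i + 1) B U E‖ := rfl
          _ ≤ M := hder (i + 1) (Nat.succ_le_succ (Nat.zero_le i))
              (Nat.succ_le_succ hin) E hE
          _ ≤ M + 1 := by linarith
    -- main computation
    have key : ‖iteratedDerivWithin (n + 1) G U E‖ ≤
        (M' + 2) ^ n * ((M + 1) * C ^ 2) * b ^ (n + 2) := by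
      rw [iteratedDerivWithin_succ']
      rw [iteratedDerivWithin_congr hderivG hE]
      rw [← norm_iteratedFDerivWithin_eq_norm_iteratedDerivWithin]
      have hmul := norm_iteratedFDerivWithin_mul_le (𝕜 := ℝ) (N := (n : WithTop ℕ∞))
        hhC hpC hU' hE (n := n) le_rfl
      refine hmul.trans ?_
      have hterm : ∀ i ∈ Finset.range (n + 1),
          (n.choose i : ℝ) * ‖iteratedFDerivWithin ℝ i h U E‖ *
            ‖iteratedFDerivWithin ℝ (n - i) p U E‖ ≤
          (n.choose i : ℝ) * M' ^ i * 2 ^ (n - i) * ((M + 1) * C ^ 2 * b ^ (n + 2)) := by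
        intro i hir
        have hin : i ≤ n := Nat.lt_succ_iff.mp (Finset.mem_range.mp hir)
        have h1 := hhb i hin
        have h2 := hpb (n - i) (Nat.sub_le n i)
        have hbpow : b ^ (n - i + 2) ≤ M' ^ i * b ^ (n + 2) := by
          have e : b ^ (n - i + 2) = a ^ i * b ^ (n + 2) := by
            have : a ^ i * b ^ (n + 2) = (a ^ i * b ^ i) * b ^ (n - i + 2) := by
              have : i + (n - i + 2) = n + 2 := by omega
              rw [← this, pow_add]; ring
            rw [this, ← mul_pow, hab, one_pow, one_mul]
          rw [e]
          exact mul_le_mul_of_nonneg_right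
            (pow_le_pow_left₀ ha.le (haM.trans hMM') i) (by positivity)
        calc (n.choose i : ℝ) * ‖iteratedFDerivWithin ℝ i h U E‖ *
              ‖iteratedFDerivWithin ℝ (n - i) p U E‖
            ≤ (n.choose i : ℝ) * (M + 1) * (2 ^ (n - i) * (C ^ 2 * b ^ (n - i + 2))) := by
              apply mul_le_mul
              · exact mul_le_mul_of_nonneg_left h1 (Nat.cast_nonneg _)
              · exact h2
              · positivity
              · positivity
          _ ≤ (n.choose i : ℝ) * (M + 1) * (2 ^ (n - i) * (C ^ 2 * (M' ^ i * b ^ (n + 2)))) := by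
              apply mul_le_mul_of_nonneg_left _ (by positivity)
              apply mul_le_mul_of_nonneg_left _ (by positivity)
              exact mul_le_mul_of_nonneg_left hbpow (by positivity)
          _ = (n.choose i : ℝ) * M' ^ i * 2 ^ (n - i) * ((M + 1) * C ^ 2 * b ^ (n + 2)) := by
              ring
      refine (Finset.sum_le_sum hterm).trans ?_
      rw [← Finset.sum_mul]
      have hsum : (∑ i ∈ Finset.range (n + 1), (n.choose i : ℝ) * M' ^ i * 2 ^ (n - i))
          = (M' + 2) ^ n := by
        rw [add_pow]
        apply Finset.sum_congr rfl
        intro i _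
        ring
      rw [hsum]
      ring_nf
      exact le_refl _
    -- conclude
    refine le_trans ?_ (le_max_right C _)
    have habpow : a ^ (n + 1 + 1) * b ^ (n + 2) = 1 := by
      rw [show n + 1 + 1 = n + 2 from rfl, ← mul_pow, hab, one_pow]
    calc ‖iteratedDerivWithin (n + 1) G U E‖ * a ^ (n + 1 + 1)
        ≤ ((M' + 2) ^ n * ((M + 1) * C ^ 2) * b ^ (n + 2)) * a ^ (n + 1 + 1) :=
          mul_le_mul_of_nonneg_right key (by positivity)
      _ = (M' + 2) ^ n * ((M + 1) * C ^ 2) * (a ^ (n + 1 + 1) * b ^ (n + 2)) := by ring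
      _ = (M' + 2) ^ n * ((M + 1) * C ^ 2) := by rw [habpow, mul_one]

/-- Derivatives of `G = (B − id)⁻¹` behave as if `B` were constant:
`|G^{(k)}(E)| · |B(E) − E|^{k+1} ≤ C`. -/
theorem stmt8 (k : ℕ) (M : ℝ) (hM : 0 < M) :
    ∃ C : ℝ, 0 < C ∧
      ∀ U : Set ℝ, IsOpen U →
      ∀ B : ℝ → ℂ, ContDiffOn ℝ k B U →
        (∀ E ∈ U, B E ≠ (E : ℂ)) →
        (∀ E ∈ U, ‖B E - E‖ ≤ M) →
        (∀ j : ℕ, 1 ≤ j → j ≤ k →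
          ∀ E ∈ U, ‖iteratedDerivWithin j B U E‖ ≤ M) →
      ∀ E ∈ U,
        ‖iteratedDerivWithin k (fun E' : ℝ => (B E' - E')⁻¹) U E‖
            * ‖B E - E‖ ^ (k + 1) ≤ C := by
  obtain ⟨C, hC, H⟩ := aux8 M hM k
  exact ⟨C, hC, fun U hU B hB hne hbd hder E hE =>
    H U hU B hB hne hbd hder k le_rfl E hE⟩
end

section
/- Let R be a (not necessarily commutative) ring and let A, H ∈ R. Define iterated commutators by ad_A^{(0)}(H) = H and ad_A^{(k+1)}(H) = ad_A^{(k)}(H)·A − A·ad_A^{(k)}(H). Then for every n ∈ ℕ: H·A^{2n+1} − A^{2n+1}·H = (2n+1)·Aⁿ·(HA − AH)·Aⁿ + Σ_{k=2}^{n+1} binom(n+1, k) · ( A^{n+1−k} · ad_A^{(k)}(H) · Aⁿ + (−1)^{k−1} · Aⁿ · ad_A^{(k)}(H) · A^{n+1−k} ). -/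
/-!
Right multiplication by `A` is the sum of left multiplication by `A` and `ad_A = [·, A]`, and
these two operators commute, so the binomial theorem gives
`H Aᵐ = ∑ₖ C(m,k) A^(m-k) ad_A^k(H)` and, symmetrically, `Aᵐ H = ∑ₖ C(m,k) (-1)ᵏ ad_A^k(H) A^(m-k)`.
Splitting `A^(2n+1)` as `A^(n+1) Aⁿ` in `H A^(2n+1)` and as `Aⁿ A^(n+1)` in `A^(2n+1) H` puts every
term in the form `Aᵃ ad_A^k(H) Aᵇ`; the terms with `k = 0, 1` add up to `(2n+1) Aⁿ [H,A] Aⁿ`.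
-/

/-- Iterated commutator: `ad_A^(0)(H) = H`, `ad_A^(k+1)(H) = ad_A^(k)(H)·A − A·ad_A^(k)(H)`. -/
def adIter {R : Type*} [Ring R] (A H : R) : ℕ → R
  | 0 => H
  | k + 1 => adIter A H k * A - A * adIter A H k

open Finset LinearMap

section

variable {R : Type*} [Ring R]

noncomputable def adEnd (A : R) : Module.End ℤ R :=
  mulRight ℤ A - mulLeft ℤ A

lemma adEnd_pow_apply (A H : R) (k : ℕ) : (adEnd A ^ k) H = adIter A H k := by
  induction k with
  | zero => rfl
  | succ k ih =>
    rw [pow_succ', Module.End.mul_apply, ih]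
    simp [adEnd, adIter]

lemma neg_adEnd_pow_apply (A H : R) (k : ℕ) :
    ((-adEnd A) ^ k) H = (-1) ^ k * adIter A H k := by
  induction k with
  | zero => simp [adIter]
  | succ k ih =>
    rw [pow_succ', Module.End.mul_apply, ih, adIter, pow_succ', neg_one_mul]
    simp only [adEnd, LinearMap.neg_apply, LinearMap.sub_apply, mulRight_apply, mulLeft_apply]
    rw [← mul_assoc A, ← ((Commute.neg_one_left A).pow_left k).eq]
    noncomm_ring

lemma commute_mulLeft_adEnd (A : R) : Commute (mulLeft ℤ A) (adEnd A) :=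
  (commute_mulLeft_right A A).sub_right (Commute.refl _)

lemma commute_mulRight_adEnd (A : R) : Commute (mulRight ℤ A) (adEnd A) :=
  (Commute.refl _).sub_right (commute_mulLeft_right A A).symm

theorem mul_pow_eq_sum_adIter (A H : R) (m : ℕ) :
    H * A ^ m = ∑ k ∈ range (m + 1), m.choose k • (A ^ (m - k) * adIter A H k) := by
  have hR : mulRight ℤ A = adEnd A + mulLeft ℤ A := by simp [adEnd]
  rw [← mulRight_apply (R := ℤ), ← pow_mulRight, hR,
    (commute_mulLeft_adEnd A).symm.add_pow, LinearMap.sum_apply]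
  refine sum_congr rfl fun k _ => ?_
  rw [((commute_mulLeft_adEnd A).symm.pow_pow k (m - k)).eq, Module.End.mul_apply,
    Module.End.natCast_apply, Module.End.mul_apply, map_nsmul, map_nsmul,
    adEnd_pow_apply, pow_mulLeft, mulLeft_apply]

theorem pow_mul_eq_sum_adIter (A H : R) (m : ℕ) :
    A ^ m * H = ∑ k ∈ range (m + 1),
      m.choose k • ((-1) ^ k * adIter A H k * A ^ (m - k)) := by
  have hL : mulLeft ℤ A = -adEnd A + mulRight ℤ A := by simp [adEnd]
  rw [← mulLeft_apply (R := ℤ), ← pow_mulLeft, hL,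
    (commute_mulRight_adEnd A).neg_right.symm.add_pow, LinearMap.sum_apply]
  refine sum_congr rfl fun k _ => ?_
  rw [((commute_mulRight_adEnd A).neg_right.symm.pow_pow k (m - k)).eq, Module.End.mul_apply,
    Module.End.natCast_apply, Module.End.mul_apply, map_nsmul, map_nsmul,
    neg_adEnd_pow_apply, pow_mulRight, mulRight_apply]

theorem mul_pow_sub_pow_mul_eq_sum_adIter (A H : R) (m n : ℕ) :
    H * A ^ (m + n) - A ^ (n + m) * H =
      ∑ k ∈ range (m + 1), m.choose k •
        (A ^ (m - k) * adIter A H k * A ^ n - A ^ n * ((-1) ^ k * adIter A H k * A ^ (m - k))) := by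
  rw [pow_add, pow_add, ← mul_assoc, mul_assoc (A ^ n), mul_pow_eq_sum_adIter A H m,
    pow_mul_eq_sum_adIter A H m, sum_mul, mul_sum, ← sum_sub_distrib]
  refine sum_congr rfl fun k _ => ?_
  rw [smul_mul_assoc, mul_smul_comm, smul_sub]

end

/-- The commutator `[H, A^{2n+1}]` equals `(2n+1) Aⁿ [H,A] Aⁿ` plus terms with
higher-order commutators flanked by lower powers of `A`. -/
theorem stmt15 {R : Type*} [Ring R] (A H : R) (n : ℕ) :
    H * A ^ (2 * n + 1) - A ^ (2 * n + 1) * H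
      = (2 * n + 1) • (A ^ n * (H * A - A * H) * A ^ n)
        + ∑ k ∈ Finset.Icc 2 (n + 1),
            (n + 1).choose k •
              (A ^ (n + 1 - k) * adIter A H k * A ^ n
                + (-1 : R) ^ (k - 1) * (A ^ n * adIter A H k * A ^ (n + 1 - k))) := by
  have h := mul_pow_sub_pow_mul_eq_sum_adIter A H (n + 1) n
  rw [show n + 1 + n = 2 * n + 1 by ring, show n + (n + 1) = 2 * n + 1 by ring] at h
  rw [h, range_eq_Ico, ← sum_Ico_consecutive _ (Nat.zero_le 2) (by omega : 2 ≤ n + 1 + 1),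
    Ico_add_one_right_eq_Icc]
  congr 1
  · have h₀ : A ^ (n + 1) * H * A ^ n - A ^ n * (1 * H * A ^ (n + 1))
        = -(A ^ n * (H * A - A * H) * A ^ n) := by
      nth_rw 2 [pow_succ']; rw [pow_succ]; noncomm_ring
    have h₁ : A ^ n * (H * A - A * H) * A ^ n - A ^ n * (-1 * (H * A - A * H) * A ^ n)
        = 2 • (A ^ n * (H * A - A * H) * A ^ n) := by
      noncomm_ring
    rw [← range_eq_Ico]
    simp only [sum_range_succ, Finset.range_zero, sum_empty, adIter, zero_add,
      Nat.choose_zero_right, Nat.choose_one_right, Nat.sub_zero, Nat.add_sub_cancel, pow_zero,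
      pow_one, one_smul, h₀, h₁]
    module
  · refine sum_congr rfl fun k hk => ?_
    obtain ⟨j, rfl⟩ : ∃ j, k = j + 1 := ⟨k - 1, by grind⟩
    rw [Nat.add_sub_cancel, pow_succ]
    rcases neg_one_pow_eq_or R j with hsign | hsign <;> rw [hsign] <;> noncomm_ring
end
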